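/- arXiv:2011.06631 — 2 statements merged into one kernel-verified Lean document; each statement's English description precedes it below -/
import Mathlib

section
/- In an episodic learning process, every policy π has a unique stationary distribution ρ_π satisfying ρ_π = ρ_π M_π, supported on the reachable states S_π. -/
open scoped ENNReal Classical
open Filter Topology

noncomputable section

def chainOf {σ A : Type} (P : σ → A → σ → ℝ≥0∞) (π : σ → A → ℝ≥0∞) (s s' : σ) : ℝ≥0∞ :=
  ∑' a, π s a * P s a s'

def stepProb {σ : Type} (M : σ → σ → ℝ≥0∞) : ℕ → σ → σ → ℝ≥0∞
  | 0, s, s' => if s = s' then 1 else 0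
  | t + 1, s, s' => ∑' u, stepProb M t s u * M u s'

def epiStep {σ : Type} (M : σ → σ → ℝ≥0∞) (T : Set σ) (s : σ) : ℕ → σ → ℝ≥0∞
  | 0, u => M s u
  | t + 1, u => ∑' v, if v ∈ T then 0 else epiStep M T s t v * M v u

def termHit {σ : Type} (M : σ → σ → ℝ≥0∞) (T : Set σ) (s : σ) (t : ℕ) : ℝ≥0∞ :=
  ∑' u, if u ∈ T then epiStep M T s t u else 0

def meanEpiLen {σ : Type} (M : σ → σ → ℝ≥0∞) (T : Set σ) (s : σ) : ℝ≥0∞ :=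
  ∑' t : ℕ, ((t : ℝ≥0∞) + 1) * termHit M T s t

def TermSet {S A : Type} (P : S → A → S → ℝ≥0∞) (ρ0 : S → ℝ≥0∞) : Set S :=
  {s | ∀ s₀, 0 < ρ0 s₀ → ∀ a a', P s a = P s₀ a'}

def ReachSet {σ : Type} (M : σ → σ → ℝ≥0∞) (ρ0 : σ → ℝ≥0∞) : Set σ :=
  {s | ∃ t : ℕ, 0 < ∑' s₀, ρ0 s₀ * stepProb M t s₀ s}

structure ELP (S A : Type) where
  P : S → A → S → ℝ≥0∞
  R : S → ℝ
  ρ0 : S → ℝ≥0∞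
  P_sum : ∀ s a, ∑' s', P s a s' = 1
  ρ0_sum : ∑' s, ρ0 s = 1
  homog : ∀ s s', 0 < ρ0 s → 0 < ρ0 s' → ∀ a a', P s a = P s' a'
  epi_fin : ∀ π : S → A → ℝ≥0∞, (∀ s, ∑' a, π s a = 1) → ∀ s ∈ TermSet P ρ0,
      (∑' t, termHit (chainOf P π) (TermSet P ρ0) s t) = 1 ∧
      meanEpiLen (chainOf P π) (TermSet P ρ0) s < ⊤

/-!
Fix an initial state `s₀`. Every terminal state has the same transition row as `s₀`, so the
chain regenerates at each entrance into `T`. The expected number `ν u` of visits to `u` during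
one episode (from `s₀` up to the first entrance into `T`) is a stationary measure of total mass
the mean episode length `L ∈ [1, ∞)`, and `ν / L` is the stationary distribution (Kac's cycle
formula); it vanishes off the reachable states.

Conversely, if `ρ` is stationary, then off `T` it equals `ρ(T)` times the occupation of the
first `n` steps of an episode, plus the mass of `ρ` that has avoided `T` for `n` steps. From a
reachable state the chain enters `T` almost surely, so this remainder vanishes when `ρ` lives on
reachable states; hence `ρ = ρ(T) • ν`, and the total mass forces `ρ(T) = 1 / L`.
-/

theorem ENNReal.tsum_tsum_nat_add (f : ℕ → ℝ≥0∞) :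
    ∑' t, ∑' j, f (j + t) = ∑' n : ℕ, ((n : ℝ≥0∞) + 1) * f n := by
  simp_rw [add_comm _ (_ : ℕ)]
  rw [← ENNReal.tsum_prod, ← (Finset.HasAntidiagonal.sigmaAntidiagonalEquivProd (A := ℕ)).tsum_eq,
    ENNReal.tsum_sigma']
  refine tsum_congr fun n => ?_
  simp only [tsum_fintype, Finset.HasAntidiagonal.sigmaAntidiagonalEquivProd_apply]
  rw [Finset.sum_congr rfl fun b _ => congrArg f (Finset.HasAntidiagonal.mem_antidiagonal.1 b.2)]
  simp

open MeasureTheory in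
theorem ENNReal.tendsto_tsum_mul_of_le_one {ι : Type*} {ρ : ι → ℝ≥0∞} (hρ : ∑' i, ρ i ≠ ∞)
    {f : ℕ → ι → ℝ≥0∞} (hf_le : ∀ n i, f n i ≤ 1)
    (hf : ∀ i, ρ i ≠ 0 → Tendsto (f · i) atTop (𝓝 0)) :
    Tendsto (fun n => ∑' i, ρ i * f n i) atTop (𝓝 0) := by
  let _ : MeasurableSpace ι := ⊤
  have h := tendsto_lintegral_of_dominated_convergence (μ := Measure.count)
    (F := fun n i => ρ i * f n i) (f := fun _ => 0) ρ (fun _ => measurable_from_top)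
    (fun n => .of_forall fun i => mul_le_of_le_one_right' (hf_le n i))
    (by rwa [lintegral_count]) (.of_forall fun i => ?_)
  · simpa [lintegral_count] using h
  by_cases hi : ρ i = 0
  · simp [hi]
  · simpa using ENNReal.Tendsto.const_mul (hf i hi) (.inr (ne_top_of_le_ne_top hρ
      (ENNReal.le_tsum i)))

section stepProb

variable {S : Type} (K : S → S → ℝ≥0∞)

theorem tsum_stepProb_zero_mul (s : S) (f : S → ℝ≥0∞) :
    ∑' v, stepProb K 0 s v * f v = f s := by
  simp [stepProb]

theorem tsum_mul_stepProb_zero (f : S → ℝ≥0∞) (u : S) :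
    ∑' v, f v * stepProb K 0 v u = f u := by
  simp [stepProb]

theorem stepProb_one (s u : S) : stepProb K 1 s u = K s u :=
  tsum_stepProb_zero_mul K s (K · u)

theorem stepProb_succ' (n : ℕ) (s u : S) :
    stepProb K (n + 1) s u = ∑' v, K s v * stepProb K n v u := by
  induction n generalizing u with
  | zero => rw [stepProb_one, tsum_mul_stepProb_zero]
  | succ n ih =>
    calc stepProb K (n + 2) s u = ∑' w, stepProb K (n + 1) s w * K w u := rfl
      _ = ∑' v, K s v * ∑' w, stepProb K n v w * K w u := by
          simp_rw [ih, ← ENNReal.tsum_mul_right, ← ENNReal.tsum_mul_left, mul_assoc]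
          exact ENNReal.tsum_comm
      _ = ∑' v, K s v * stepProb K (n + 1) v u := rfl

theorem stepProb_succ_eq_of_row_eq {s s' : S} (h : K s = K s') (n : ℕ) :
    stepProb K (n + 1) s = stepProb K (n + 1) s' :=
  funext fun u => by simp only [stepProb_succ', h]

theorem tsum_mul_stepProb_succ (ρ : S → ℝ≥0∞) (n : ℕ) (u : S) :
    ∑' v, ρ v * stepProb K (n + 1) v u = ∑' w, (∑' v, ρ v * K v w) * stepProb K n w u := by
  simp only [stepProb_succ', ← ENNReal.tsum_mul_left, ← ENNReal.tsum_mul_right, mul_assoc]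
  exact ENNReal.tsum_comm

theorem tsum_stepProb_succ_mul (f : S → ℝ≥0∞) (n : ℕ) (s : S) :
    ∑' u, stepProb K (n + 1) s u * f u = ∑' v, stepProb K n s v * ∑' u, K v u * f u := by
  simp only [stepProb, ← ENNReal.tsum_mul_right, ← ENNReal.tsum_mul_left, mul_assoc]
  exact ENNReal.tsum_comm

theorem tsum_stepProb_succ_le (hK : ∀ s, ∑' u, K s u ≤ 1) (n : ℕ) (s : S) :
    ∑' u, stepProb K (n + 1) s u ≤ ∑' u, stepProb K n s u := by
  have h := tsum_stepProb_succ_mul K 1 n s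
  simp only [Pi.one_apply, mul_one] at h
  exact h ▸ ENNReal.tsum_le_tsum fun v => mul_le_of_le_one_right' (hK v)

theorem tsum_stepProb_eq_one (hK : ∀ s, ∑' u, K s u = 1) (n : ℕ) (s : S) :
    ∑' u, stepProb K n s u = 1 := by
  induction n with
  | zero => simpa using tsum_stepProb_zero_mul K s 1
  | succ n ih => simpa [hK, ih] using tsum_stepProb_succ_mul K 1 n s

end stepProb

namespace EpisodicChain

variable {S : Type}

/-- `stepProb (taboo M T) n s u` is the probability of being at `u` at time `n` without having
entered `T` at times `1, …, n`. -/
def taboo (M : S → S → ℝ≥0∞) (T : Set S) (v u : S) : ℝ≥0∞ :=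
  if u ∈ T then 0 else M v u

def survival (M : S → S → ℝ≥0∞) (T : Set S) (n : ℕ) (s : S) : ℝ≥0∞ :=
  ∑' u, stepProb (taboo M T) n s u

/-- The expected number of visits to `u` at times `1, …, τ`, where `τ ≥ 1` is the first entrance
time into `T` of the chain started at `s`. -/
def occupation (M : S → S → ℝ≥0∞) (T : Set S) (s u : S) : ℝ≥0∞ :=
  ∑' t, epiStep M T s t u

variable {M : S → S → ℝ≥0∞} {T : Set S} {s₀ : S}

theorem stepProb_taboo_succ (t : ℕ) (s u : S) :
    stepProb (taboo M T) (t + 1) s u = if u ∈ T then 0 else epiStep M T s t u := by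
  induction t generalizing u with
  | zero => rw [stepProb_one]; rfl
  | succ t ih =>
    rw [stepProb, epiStep]
    by_cases hu : u ∈ T <;> simp [ih, taboo, hu]

theorem survival_zero (s : S) : survival M T 0 s = 1 := by
  simpa [survival] using tsum_stepProb_zero_mul (taboo M T) s 1

theorem survival_succ' (n : ℕ) (s : S) :
    survival M T (n + 1) s = ∑' u, taboo M T s u * survival M T n u := by
  simp only [survival, stepProb_succ', ← ENNReal.tsum_mul_left]
  exact ENNReal.tsum_comm

theorem tsum_epiStep (hrow : ∀ s, ∑' u, M s u = 1) (s : S) (t : ℕ) :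
    ∑' u, epiStep M T s t u = survival M T t s := by
  cases t with
  | zero => rw [survival_zero]; exact hrow s
  | succ t =>
    calc ∑' u, epiStep M T s (t + 1) u
        = ∑' v, ∑' u, if v ∈ T then 0 else epiStep M T s t v * M v u := ENNReal.tsum_comm
      _ = survival M T (t + 1) s := tsum_congr fun v => by
          rw [stepProb_taboo_succ]
          split_ifs <;> simp [ENNReal.tsum_mul_left, hrow]

theorem survival_eq_termHit_add (hrow : ∀ s, ∑' u, M s u = 1) (s : S) (t : ℕ) :
    survival M T t s = termHit M T s t + survival M T (t + 1) s := by
  rw [← tsum_epiStep hrow, termHit, survival, ← ENNReal.tsum_add]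
  refine tsum_congr fun u => ?_
  rw [stepProb_taboo_succ]
  split_ifs <;> simp

theorem survival_antitone (hrow : ∀ s, ∑' u, M s u = 1) (s : S) :
    Antitone (survival M T · s) := by
  have h_taboo : ∀ v, ∑' u, taboo M T v u ≤ 1 := fun v =>
    (ENNReal.tsum_le_tsum fun u => by unfold taboo; split_ifs <;> simp).trans_eq (hrow v)
  exact antitone_nat_of_succ_le fun n => tsum_stepProb_succ_le _ h_taboo n s

theorem survival_le_one (hrow : ∀ s, ∑' u, M s u = 1) (n : ℕ) (s : S) :
    survival M T n s ≤ 1 :=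
  (survival_antitone hrow s n.zero_le).trans_eq (survival_zero s)

theorem taboo_eq_of_mem (hT : ∀ s ∈ T, M s = M s₀) {s : S} (hs : s ∈ T) :
    taboo M T s = taboo M T s₀ := by
  funext u
  simp [taboo, hT s hs]

theorem survival_eq_of_mem (hT : ∀ s ∈ T, M s = M s₀) {s : S} (hs : s ∈ T) (n : ℕ) :
    survival M T n s = survival M T n s₀ := by
  cases n with
  | zero => simp only [survival_zero]
  | succ n => simp only [survival_succ', taboo_eq_of_mem hT hs]

theorem survival_eq_tsum_termHit (hrow : ∀ s, ∑' u, M s u = 1) {s : S}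
    (hΘ : ∑' t, termHit M T s t = 1) (n : ℕ) :
    survival M T n s = ∑' j, termHit M T s (j + n) := by
  have hsum : ∀ n, ∑ j ∈ Finset.range n, termHit M T s j + survival M T n s = 1 := by
    intro n
    induction n with
    | zero => simp [survival_zero]
    | succ n ih => rw [Finset.sum_range_succ, add_assoc, ← survival_eq_termHit_add hrow, ih]
  have hfin : ∑ j ∈ Finset.range n, termHit M T s j ≠ ∞ :=
    ne_top_of_le_ne_top ENNReal.one_ne_top (hsum n ▸ le_self_add)
  refine (ENNReal.add_right_inj hfin).1 ?_
  rw [hsum, ENNReal.summable.sum_add_tsum_nat_add', hΘ]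

theorem tendsto_survival (hrow : ∀ s, ∑' u, M s u = 1) {s : S}
    (hΘ : ∑' t, termHit M T s t = 1) : Tendsto (survival M T · s) atTop (𝓝 0) := by
  simpa only [survival_eq_tsum_termHit hrow hΘ] using
    ENNReal.tendsto_sum_nat_add _ (hΘ ▸ ENNReal.one_ne_top)

theorem tsum_occupation (hrow : ∀ s, ∑' u, M s u = 1) {s : S}
    (hΘ : ∑' t, termHit M T s t = 1) : ∑' u, occupation M T s u = meanEpiLen M T s := by
  simp only [occupation]
  rw [ENNReal.tsum_comm]
  simp only [tsum_epiStep hrow, survival_eq_tsum_termHit hrow hΘ, ENNReal.tsum_tsum_nat_add,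
    meanEpiLen]

theorem one_le_meanEpiLen {s : S} (hΘ : ∑' t, termHit M T s t = 1) : 1 ≤ meanEpiLen M T s :=
  hΘ ▸ ENNReal.tsum_le_tsum fun _ => le_mul_of_one_le_left' le_add_self

theorem tsum_indicator_occupation {s : S} (hΘ : ∑' t, termHit M T s t = 1) :
    ∑' u, T.indicator (occupation M T s) u = 1 := by
  calc ∑' u, T.indicator (occupation M T s) u
      = ∑' u, ∑' t, if u ∈ T then epiStep M T s t u else 0 :=
        tsum_congr fun u => by by_cases hu : u ∈ T <;> simp [hu, occupation]
    _ = 1 := ENNReal.tsum_comm.trans hΘ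

theorem occupation_eq_add (s u : S) :
    occupation M T s u = M s u + ∑' v, Tᶜ.indicator (occupation M T s) v * M v u := by
  change ∑' t, epiStep M T s t u = _
  rw [tsum_eq_zero_add' (f := fun t => epiStep M T s t u) ENNReal.summable]
  congr 1
  calc ∑' t, epiStep M T s (t + 1) u
      = ∑' v, ∑' t, if v ∈ T then 0 else epiStep M T s t v * M v u := ENNReal.tsum_comm
    _ = ∑' v, Tᶜ.indicator (occupation M T s) v * M v u := tsum_congr fun v => by
        by_cases hv : v ∈ T
        · simp [hv]
        · simp only [hv, if_false, Set.indicator_of_mem (Set.mem_compl hv), occupation,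
            ENNReal.tsum_mul_right]

theorem tsum_mul_eq_indicator_add {K : S → S → ℝ≥0∞} (hK : ∀ v ∈ T, K v = K s₀)
    (ρ : S → ℝ≥0∞) (u : S) :
    ∑' v, ρ v * K v u = (∑' v, T.indicator ρ v) * K s₀ u + ∑' v, Tᶜ.indicator ρ v * K v u := by
  rw [← ENNReal.tsum_mul_right, ← ENNReal.tsum_add]
  refine tsum_congr fun v => ?_
  by_cases hv : v ∈ T <;> simp [hv, hK v]

theorem occupation_stationary (hT : ∀ s ∈ T, M s = M s₀)
    (hΘ : ∑' t, termHit M T s₀ t = 1) (u : S) :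
    ∑' v, occupation M T s₀ v * M v u = occupation M T s₀ u := by
  rw [tsum_mul_eq_indicator_add hT, tsum_indicator_occupation hΘ, one_mul, ← occupation_eq_add]

theorem epiStep_le_stepProb (t : ℕ) (s u : S) : epiStep M T s t u ≤ stepProb M (t + 1) s u := by
  induction t generalizing u with
  | zero => rw [stepProb_one]; rfl
  | succ t ih =>
    refine ENNReal.tsum_le_tsum fun v => ?_
    split_ifs
    · exact zero_le
    · exact mul_le_mul_left (ih v) _

theorem mem_reachSet_of_occupation_ne_zero {ρ0 : S → ℝ≥0∞} (hρ0 : ρ0 s₀ ≠ 0) {u : S}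
    (hu : occupation M T s₀ u ≠ 0) : u ∈ ReachSet M ρ0 := by
  obtain ⟨t, ht⟩ : ∃ t, epiStep M T s₀ t u ≠ 0 := by
    simpa [occupation, ENNReal.tsum_eq_zero] using hu
  exact ⟨t + 1, (pos_iff_ne_zero.2 (mul_ne_zero hρ0 ht)).trans_le
    ((mul_le_mul_right (epiStep_le_stepProb t s₀ u) _).trans (ENNReal.le_tsum s₀))⟩

theorem tsum_mul_survival_le (hrow : ∀ s, ∑' u, M s u = 1) (hT : ∀ s ∈ T, M s = M s₀)
    (v : S) (n : ℕ) :
    ∑' u, M v u * survival M T n u ≤ survival M T n s₀ + survival M T (n + 1) v := by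
  calc ∑' u, M v u * survival M T n u
      ≤ ∑' u, (M v u * survival M T n s₀ + taboo M T v u * survival M T n u) :=
        ENNReal.tsum_le_tsum fun u => by
          by_cases hu : u ∈ T
          · simp [taboo, hu, survival_eq_of_mem hT hu]
          · simp [taboo, hu]
    _ = survival M T n s₀ + survival M T (n + 1) v := by
        rw [ENNReal.tsum_add, ENNReal.tsum_mul_right, hrow, one_mul, survival_succ']

theorem tsum_stepProb_mul_survival_le (hrow : ∀ s, ∑' u, M s u = 1)
    (hT : ∀ s ∈ T, M s = M s₀) {s : S} (hs : s ∈ T) (k n : ℕ) :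
    ∑' u, stepProb M k s u * survival M T n u ≤ (k + 1) * survival M T n s₀ := by
  induction k generalizing n with
  | zero => simp [tsum_stepProb_zero_mul, survival_eq_of_mem hT hs]
  | succ k ih =>
    calc ∑' u, stepProb M (k + 1) s u * survival M T n u
        = ∑' v, stepProb M k s v * ∑' u, M v u * survival M T n u :=
          tsum_stepProb_succ_mul M _ k s
      _ ≤ ∑' v, stepProb M k s v * (survival M T n s₀ + survival M T (n + 1) v) :=
          ENNReal.tsum_le_tsum fun v => mul_le_mul_right (tsum_mul_survival_le hrow hT v n) _
      _ = survival M T n s₀ + ∑' v, stepProb M k s v * survival M T (n + 1) v := by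
          simp only [mul_add, ENNReal.tsum_add, ENNReal.tsum_mul_right,
            tsum_stepProb_eq_one M hrow, one_mul]
      _ ≤ survival M T n s₀ + (k + 1) * survival M T n s₀ :=
          add_le_add_right ((ih (n + 1)).trans
            (mul_le_mul_right (survival_antitone hrow s₀ n.le_succ) _)) _
      _ = (↑(k + 1) + 1) * survival M T n s₀ := by push_cast; ring

theorem tendsto_survival_of_mem_reachSet (hrow : ∀ s, ∑' u, M s u = 1)
    (hT : ∀ s ∈ T, M s = M s₀) (hΘ : ∑' t, termHit M T s₀ t = 1) {ρ0 : S → ℝ≥0∞}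
    (hρ0T : ∀ s, ρ0 s ≠ 0 → s ∈ T) {u : S} (hu : u ∈ ReachSet M ρ0) :
    Tendsto (survival M T · u) atTop (𝓝 0) := by
  obtain ⟨k, hk⟩ := hu
  obtain ⟨s, hs⟩ : ∃ s, ρ0 s * stepProb M k s u ≠ 0 := by
    by_contra! h
    simp [h] at hk
  have hc0 : stepProb M k s u ≠ 0 := right_ne_zero_of_mul hs
  have hc1 : stepProb M k s u ≠ ∞ := ne_top_of_le_ne_top ENNReal.one_ne_top
    ((ENNReal.le_tsum u).trans_eq (tsum_stepProb_eq_one M hrow k s))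
  have hbound : Tendsto (fun n => ((k : ℝ≥0∞) + 1) * survival M T n s₀) atTop (𝓝 0) := by
    simpa using ENNReal.Tendsto.const_mul (tendsto_survival hrow hΘ) (.inr (by simp))
  have hcu : Tendsto (fun n => stepProb M k s u * survival M T n u) atTop (𝓝 0) :=
    tendsto_of_tendsto_of_tendsto_of_le_of_le tendsto_const_nhds hbound (fun _ => zero_le)
      fun n => (ENNReal.le_tsum u).trans
        (tsum_stepProb_mul_survival_le hrow hT (hρ0T s (left_ne_zero_of_mul hs)) k n)
  simpa [ENNReal.inv_mul_cancel_left hc0 hc1] using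
    ENNReal.Tendsto.const_mul hcu (a := (stepProb M k s u)⁻¹) (.inr (ENNReal.inv_ne_top.2 hc0))

section Uniqueness

variable {ρ : S → ℝ≥0∞}

theorem tsum_mul_taboo (hstat : ∀ u, ρ u = ∑' v, ρ v * M v u) (u : S) :
    ∑' v, ρ v * taboo M T v u = Tᶜ.indicator ρ u := by
  by_cases hu : u ∈ T
  · simp [taboo, hu]
  · simp only [taboo, hu, if_false, Set.indicator_of_mem (Set.mem_compl hu)]
    exact (hstat u).symm

theorem tsum_mul_stepProb_taboo_succ (hT : ∀ s ∈ T, M s = M s₀)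
    (hstat : ∀ u, ρ u = ∑' v, ρ v * M v u) (n : ℕ) (u : S) :
    ∑' v, ρ v * stepProb (taboo M T) (n + 1) v u =
      (∑' v, T.indicator ρ v) * stepProb (taboo M T) (n + 1) s₀ u +
        ∑' v, ρ v * stepProb (taboo M T) (n + 2) v u := by
  rw [tsum_mul_eq_indicator_add fun v hv =>
    stepProb_succ_eq_of_row_eq _ (taboo_eq_of_mem hT hv) n,
    tsum_mul_stepProb_succ (taboo M T) ρ (n + 1)]
  simp_rw [tsum_mul_taboo hstat]

theorem eq_add_tsum_mul_stepProb_taboo (hT : ∀ s ∈ T, M s = M s₀)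
    (hstat : ∀ u, ρ u = ∑' v, ρ v * M v u) {u : S} (hu : u ∉ T) (n : ℕ) :
    ρ u = (∑' v, T.indicator ρ v) * ∑ m ∈ Finset.range n, epiStep M T s₀ m u +
      ∑' v, ρ v * stepProb (taboo M T) (n + 1) v u := by
  induction n with
  | zero => simp [stepProb_one, tsum_mul_taboo hstat, hu]
  | succ n ih =>
    rw [ih, tsum_mul_stepProb_taboo_succ hT hstat, stepProb_taboo_succ, if_neg hu,
      Finset.sum_range_succ]
    ring

theorem tendsto_tsum_mul_stepProb_taboo (hrow : ∀ s, ∑' u, M s u = 1)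
    (hmass : ∑' s, ρ s ≠ ∞) (hsupp : ∀ s, ρ s ≠ 0 → Tendsto (survival M T · s) atTop (𝓝 0))
    (u : S) : Tendsto (fun n => ∑' v, ρ v * stepProb (taboo M T) (n + 1) v u) atTop (𝓝 0) :=
  tendsto_of_tendsto_of_tendsto_of_le_of_le tendsto_const_nhds
    ((tendsto_add_atTop_iff_nat 1).2
      (ENNReal.tendsto_tsum_mul_of_le_one hmass (survival_le_one hrow) hsupp))
    (fun _ => zero_le)
    fun _ => ENNReal.tsum_le_tsum fun _ => mul_le_mul_right (ENNReal.le_tsum u) _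

theorem eq_mul_occupation (hrow : ∀ s, ∑' u, M s u = 1) (hT : ∀ s ∈ T, M s = M s₀)
    (hmass : ∑' s, ρ s ≠ ∞) (hstat : ∀ u, ρ u = ∑' v, ρ v * M v u)
    (hsupp : ∀ s, ρ s ≠ 0 → Tendsto (survival M T · s) atTop (𝓝 0)) (u : S) :
    ρ u = (∑' v, T.indicator ρ v) * occupation M T s₀ u := by
  set α := ∑' v, T.indicator ρ v
  have hα : α ≠ ∞ :=
    ne_top_of_le_ne_top hmass (ENNReal.tsum_le_tsum (Set.indicator_le_self T ρ))
  have h_compl : ∀ u ∉ T, ρ u = α * occupation M T s₀ u := fun u hu => by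
    have h := (ENNReal.Tendsto.const_mul (ENNReal.tendsto_nat_tsum (epiStep M T s₀ · u))
      (.inr hα)).add (tendsto_tsum_mul_stepProb_taboo hrow hmass hsupp u)
    rw [add_zero] at h
    exact tendsto_nhds_unique
      (tendsto_const_nhds.congr (eq_add_tsum_mul_stepProb_taboo hT hstat hu)) h
  rw [hstat u, tsum_mul_eq_indicator_add hT, occupation_eq_add, mul_add,
    ← ENNReal.tsum_mul_left]
  congr 1
  refine tsum_congr fun v => ?_
  by_cases hv : v ∈ T
  · simp [hv]
  · simp [hv, h_compl v hv, mul_assoc]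

end Uniqueness

theorem existsUnique_stationary (hrow : ∀ s, ∑' u, M s u = 1) (hT : ∀ s ∈ T, M s = M s₀)
    (hΘ : ∑' t, termHit M T s₀ t = 1) (hL : meanEpiLen M T s₀ < ⊤) {ρ0 : S → ℝ≥0∞}
    (hρ0T : ∀ s, ρ0 s ≠ 0 → s ∈ T) (hρ0 : ρ0 s₀ ≠ 0) :
    ∃! ρ : S → ℝ≥0∞, (∑' s, ρ s = 1) ∧ (∀ s', ρ s' = ∑' s, ρ s * M s s') ∧
      (∀ s, s ∉ ReachSet M ρ0 → ρ s = 0) := by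
  have hL0 : meanEpiLen M T s₀ ≠ 0 := (zero_lt_one.trans_le (one_le_meanEpiLen hΘ)).ne'
  refine ⟨fun u => (meanEpiLen M T s₀)⁻¹ * occupation M T s₀ u,
    ⟨?_, fun u => ?_, fun u hu => ?_⟩, ?_⟩
  · rw [ENNReal.tsum_mul_left, tsum_occupation hrow hΘ, ENNReal.inv_mul_cancel hL0 hL.ne]
  · simp_rw [mul_assoc, ENNReal.tsum_mul_left, occupation_stationary hT hΘ]
  · have h_occ : occupation M T s₀ u = 0 :=
      by_contra fun h => hu (mem_reachSet_of_occupation_ne_zero hρ0 h)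
    simp [h_occ]
  · rintro ρ ⟨hmass, hstat, hsupp⟩
    have hρ := eq_mul_occupation hrow hT (hmass ▸ ENNReal.one_ne_top) hstat fun s hs =>
      tendsto_survival_of_mem_reachSet hrow hT hΘ hρ0T (not_imp_comm.1 (hsupp s) hs)
    have hα : ∑' v, T.indicator ρ v = (meanEpiLen M T s₀)⁻¹ :=
      ENNReal.eq_inv_of_mul_eq_one_left <| by
      rw [← tsum_occupation hrow hΘ, ← ENNReal.tsum_mul_left, ← hmass]
      exact tsum_congr fun u => (hρ u).symm
    funext u
    rw [hρ u, hα]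

end EpisodicChain

theorem chainOf_eq_of_forall_eq {S A : Type} {P : S → A → S → ℝ≥0∞} {π : S → A → ℝ≥0∞}
    (hπ : ∀ s, ∑' a, π s a = 1) {s s' : S} (h : ∀ a a', P s a = P s' a') :
    chainOf P π s = chainOf P π s' := by
  funext u
  rcases isEmpty_or_nonempty A with hA | hA
  · simp [chainOf]
  · obtain ⟨a₀⟩ := hA
    have hconst : ∀ s'', (∀ a, P s'' a = P s' a₀) → chainOf P π s'' u = P s' a₀ u :=
      fun s'' hs'' => by simp [chainOf, hs'', ENNReal.tsum_mul_right, hπ]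
    rw [hconst s fun a => h a a₀, hconst s' fun a => (h a₀ a).symm.trans (h a₀ a₀)]

theorem tsum_chainOf {S A : Type} {P : S → A → S → ℝ≥0∞} {π : S → A → ℝ≥0∞}
    (hP : ∀ s a, ∑' s', P s a s' = 1) (hπ : ∀ s, ∑' a, π s a = 1) (s : S) :
    ∑' u, chainOf P π s u = 1 := by
  simp only [chainOf]
  rw [ENNReal.tsum_comm]
  simp [ENNReal.tsum_mul_left, hP, hπ]

theorem stmt_5_general {S A : Type} (E : ELP S A)
    (π : S → A → ℝ≥0∞) (hπ : ∀ s, ∑' a, π s a = 1) :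
    ∃! ρ : S → ℝ≥0∞, (∑' s, ρ s = 1) ∧
      (∀ s', ρ s' = ∑' s, ρ s * chainOf E.P π s s') ∧
      (∀ s, s ∉ ReachSet (chainOf E.P π) E.ρ0 → ρ s = 0) := by
  obtain ⟨s₀, hs₀⟩ : ∃ s₀, E.ρ0 s₀ ≠ 0 := by
    by_contra! h
    simpa [h] using E.ρ0_sum
  have hρ0T : ∀ s, E.ρ0 s ≠ 0 → s ∈ TermSet E.P E.ρ0 := fun s hs s₁ h₁ =>
    E.homog s s₁ (pos_iff_ne_zero.2 hs) h₁
  obtain ⟨hΘ, hL⟩ := E.epi_fin π hπ s₀ (hρ0T s₀ hs₀)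
  exact EpisodicChain.existsUnique_stationary (tsum_chainOf E.P_sum hπ)
    (fun s (hs : s ∈ TermSet E.P E.ρ0) =>
      chainOf_eq_of_forall_eq hπ (hs s₀ (pos_iff_ne_zero.2 hs₀))) hΘ hL hρ0T hs₀

/-- In an episodic learning process, every policy has a unique stationary distribution,
supported on the reachable states. -/
theorem stmt_5 {S A : Type} [Countable S] [Countable A] (E : ELP S A)
    (π : S → A → ℝ≥0∞) (hπ : ∀ s, ∑' a, π s a = 1) :
    ∃! ρ : S → ℝ≥0∞, (∑' s, ρ s = 1) ∧
      (∀ s', ρ s' = ∑' s, ρ s * chainOf E.P π s s') ∧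
      (∀ s, s ∉ ReachSet (chainOf E.P π) E.ρ0 → ρ s = 0) :=
  stmt_5_general E π hπ
end
end

section
/- In an episodic learning process, for any policy π, the episode-wise performance equals the steady-state performance times the expected episode length: E_{ζ∼M_π}[∑_{t=1}^{T(ζ)} R(s_t)] = E_{s∼ρ_π}[R(s)] · E_{ζ∼M_π}[T(ζ)]. -/
/-!
Split the stationarity equation `ρ = ρ M` according to whether the previous state is terminal.
All terminal states share the transition row of `sT`, so iterating gives
`ρ = ρ(S⊥) · ∑_{t ≤ n} P_sT(s_{t+1} = ·, T > t) + r_n`, where `r_n` is the stationary mass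
carried by paths that have avoided `S⊥` for `n + 1` steps. Every state charged by `ρ` is
reachable from `S⊥`, so the survival probability from it tends to `0`, and `r_n → 0` by
dominated convergence. Hence `ρ = ρ(S⊥) · μ` for the occupation measure `μ` of an episode
started at `sT`; since `μ` has total mass `E[T]`, this forces `μ = E[T] · ρ`, and summing `R`
against `μ` (Fubini, `R` bounded) gives the claim.
-/

open scoped ENNReal Classical
open Filter Topology

noncomputable section

theorem ENNReal.tendsto_tsum_of_dominated_convergence {α : Type*} {F : ℕ → α → ℝ≥0∞}
    {f g : α → ℝ≥0∞} (hg : ∑' a, g a ≠ ∞) (hFg : ∀ n a, F n a ≤ g a)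
    (hF : ∀ a, Tendsto (F · a) atTop (𝓝 (f a))) :
    Tendsto (fun n => ∑' a, F n a) atTop (𝓝 (∑' a, f a)) := by
  let _ : MeasurableSpace α := ⊤
  simpa only [MeasureTheory.lintegral_count] using
    MeasureTheory.tendsto_lintegral_of_dominated_convergence (μ := .count) g
      (fun _ => measurable_from_top) (fun n => .of_forall (hFg n))
      (by rwa [MeasureTheory.lintegral_count]) (.of_forall hF)

theorem tsum_tsum_toReal_mul_comm {α β : Type*} {f : α → β → ℝ≥0∞}
    (hf : ∑' a, ∑' b, f a b ≠ ∞) {R : β → ℝ} {C : ℝ} (hR : ∀ b, |R b| ≤ C) :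
    ∑' a, ∑' b, (f a b).toReal * R b = ∑' b, (∑' a, f a b).toReal * R b := by
  have hf' : ∑' p : α × β, f p.1 p.2 ≠ ∞ := by rwa [ENNReal.tsum_prod]
  have hsum : Summable (Function.uncurry fun a b => (f a b).toReal * R b) := by
    refine Summable.of_norm_bounded ((ENNReal.summable_toReal hf').mul_right C) fun p => ?_
    rw [Function.uncurry_apply_pair, Real.norm_eq_abs, abs_mul, ENNReal.abs_toReal]
    exact mul_le_mul_of_nonneg_left (hR p.2) ENNReal.toReal_nonneg
  rw [← hsum.tsum_comm]
  refine tsum_congr fun b => ?_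
  have hfin : ∀ a, f a b ≠ ∞ := fun a =>
    ne_top_of_le_ne_top hf' (ENNReal.le_tsum (f := fun p : α × β => f p.1 p.2) (a, b))
  rw [ENNReal.tsum_toReal_eq hfin, tsum_mul_right]

section Episode

variable {σ : Type} {M : σ → σ → ℝ≥0∞} {T : Set σ}

variable (M T) in
-- `epiStep M T s n` is the law of `s_{n+1}` on the event `{T > n}`, so this is `P_s(T > n)`.
def survivalProb (s : σ) (n : ℕ) : ℝ≥0∞ := ∑' u, epiStep M T s n u

variable (M T) in
def residualMass (ρ : σ → ℝ≥0∞) (n : ℕ) (u : σ) : ℝ≥0∞ :=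
  ∑' v, if v ∈ T then 0 else ρ v * epiStep M T v n u

theorem survivalProb_zero (hM : ∀ v, ∑' u, M v u = 1) (s : σ) : survivalProb M T s 0 = 1 :=
  hM s

theorem survivalProb_succ_add_termHit (hM : ∀ v, ∑' u, M v u = 1) (s : σ) (n : ℕ) :
    survivalProb M T s (n + 1) + termHit M T s n = survivalProb M T s n := by
  have hsucc : survivalProb M T s (n + 1) = ∑' v, if v ∈ T then 0 else epiStep M T s n v := by
    simp only [survivalProb, epiStep]
    rw [ENNReal.tsum_comm]
    refine tsum_congr fun v => ?_
    split_ifs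
    · simp
    · rw [ENNReal.tsum_mul_left, hM v, mul_one]
  rw [hsucc, termHit, survivalProb, ← ENNReal.tsum_add]
  exact tsum_congr fun v => by split_ifs <;> simp

theorem survivalProb_add_sum_termHit (hM : ∀ v, ∑' u, M v u = 1) (s : σ) (n : ℕ) :
    survivalProb M T s n + ∑ k ∈ Finset.range n, termHit M T s k = 1 := by
  induction n with
  | zero => simp [survivalProb_zero hM]
  | succ n ih =>
    rw [Finset.sum_range_succ, add_comm _ (termHit M T s n), ← add_assoc,
      survivalProb_succ_add_termHit hM, ih]

theorem sum_termHit_ne_top (hM : ∀ v, ∑' u, M v u = 1) (s : σ) (n : ℕ) :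
    ∑ k ∈ Finset.range n, termHit M T s k ≠ ∞ :=
  ne_top_of_le_ne_top ENNReal.one_ne_top
    ((survivalProb_add_sum_termHit hM s n).symm ▸ le_add_self)

theorem epiStep_le_one (hM : ∀ v, ∑' u, M v u = 1) (s : σ) (n : ℕ) (u : σ) :
    epiStep M T s n u ≤ 1 :=
  (ENNReal.le_tsum u).trans <|
    (survivalProb_add_sum_termHit hM s n).symm ▸ le_self_add

theorem epiStep_ne_top (hM : ∀ v, ∑' u, M v u = 1) (s : σ) (n : ℕ) (u : σ) :
    epiStep M T s n u ≠ ∞ :=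
  ne_top_of_le_ne_top ENNReal.one_ne_top (epiStep_le_one hM s n u)

theorem survivalProb_eq_tsum_termHit (hM : ∀ v, ∑' u, M v u = 1) {s : σ}
    (hterm : ∑' t, termHit M T s t = 1) (n : ℕ) :
    survivalProb M T s n = ∑' k, if n ≤ k then termHit M T s k else 0 := by
  have hhead : ∑ k ∈ Finset.range n, termHit M T s k
      = ∑' k, if k < n then termHit M T s k else 0 := by
    rw [tsum_eq_sum (s := Finset.range n) fun k hk => if_neg (by simpa using hk)]
    exact Finset.sum_congr rfl fun k hk => (if_pos (Finset.mem_range.mp hk)).symm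
  have hsplit : ∑ k ∈ Finset.range n, termHit M T s k
      + ∑' k, (if n ≤ k then termHit M T s k else 0) = 1 := by
    rw [hhead, ← ENNReal.tsum_add, ← hterm]
    refine tsum_congr fun k => ?_
    by_cases hk : k < n
    · simp [hk, Nat.not_le.mpr hk]
    · simp [hk, Nat.le_of_not_lt hk]
  rw [← ENNReal.add_right_inj (sum_termHit_ne_top hM s n), hsplit, add_comm,
    survivalProb_add_sum_termHit hM]

theorem tendsto_survivalProb_atTop (hM : ∀ v, ∑' u, M v u = 1) {s : σ}
    (hterm : ∑' t, termHit M T s t = 1) :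
    Tendsto (survivalProb M T s) atTop (𝓝 0) := by
  have hsub : survivalProb M T s = fun n => 1 - ∑ k ∈ Finset.range n, termHit M T s k :=
    funext fun n => ENNReal.eq_sub_of_add_eq (sum_termHit_ne_top hM s n)
      (survivalProb_add_sum_termHit hM s n)
  have hsum := ENNReal.tendsto_nat_tsum (termHit M T s)
  rw [hterm] at hsum
  simpa [hsub] using ENNReal.Tendsto.sub tendsto_const_nhds hsum (.inl ENNReal.one_ne_top)

theorem tsum_survivalProb (hM : ∀ v, ∑' u, M v u = 1) {s : σ}
    (hterm : ∑' t, termHit M T s t = 1) :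
    ∑' n, survivalProb M T s n = meanEpiLen M T s := by
  simp_rw [survivalProb_eq_tsum_termHit hM hterm]
  rw [ENNReal.tsum_comm, meanEpiLen]
  refine tsum_congr fun k => ?_
  rw [tsum_eq_sum (s := Finset.range (k + 1)) fun n hn => if_neg (by simpa using hn),
    Finset.sum_congr rfl fun n hn => if_pos (by simpa [Nat.lt_succ_iff] using hn),
    Finset.sum_const, Finset.card_range, nsmul_eq_mul, Nat.cast_succ]

theorem epiStep_add_add_one (s : σ) (k : ℕ) : ∀ m u,
    epiStep M T s (k + 1 + m) u
      = ∑' v, if v ∈ T then 0 else epiStep M T s k v * epiStep M T v m u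
  | 0, _ => rfl
  | m + 1, u => by
    calc epiStep M T s (k + 1 + m + 1) u
        = ∑' x, ∑' v, if x ∈ T then 0 else
            if v ∈ T then 0 else epiStep M T s k v * epiStep M T v m x * M x u := by
          simp only [epiStep]
          refine tsum_congr fun x => ?_
          split_ifs
          · simp
          · rw [epiStep_add_add_one s k m x, ← ENNReal.tsum_mul_right]
            exact tsum_congr fun v => by split_ifs <;> simp
      _ = ∑' v, if v ∈ T then 0 else epiStep M T s k v * epiStep M T v (m + 1) u := by
          rw [ENNReal.tsum_comm]
          refine tsum_congr fun v => ?_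
          split_ifs
          · simp
          · simp only [epiStep, ← ENNReal.tsum_mul_left]
            exact tsum_congr fun x => by split_ifs <;> simp [mul_assoc]

theorem epiStep_eq_of_row_eq {s s' : σ} (h : M s = M s') :
    ∀ n, epiStep M T s n = epiStep M T s' n
  | 0 => h
  | n + 1 => by
    funext u
    simp only [epiStep, epiStep_eq_of_row_eq h n]

theorem tendsto_survivalProb_of_epiStep_ne_zero (hM : ∀ v, ∑' u, M v u = 1) {s v : σ}
    (hterm : ∑' t, termHit M T s t = 1) (hv : v ∉ T) {k : ℕ} (hk : epiStep M T s k v ≠ 0) :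
    Tendsto (survivalProb M T v) atTop (𝓝 0) := by
  set c := epiStep M T s k v
  have hle : ∀ m, c * survivalProb M T v m ≤ survivalProb M T s (k + 1 + m) := fun m => by
    rw [survivalProb, survivalProb, ← ENNReal.tsum_mul_left]
    refine ENNReal.tsum_le_tsum fun u => ?_
    rw [epiStep_add_add_one]
    simpa [hv] using ENNReal.le_tsum (f := fun w => if w ∈ T then 0
      else epiStep M T s k w * epiStep M T w m u) v
  have hshift : Tendsto (fun m => c⁻¹ * survivalProb M T s (k + 1 + m)) atTop (𝓝 0) := by
    simpa [Function.comp_def, add_comm] using ENNReal.Tendsto.const_mul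
      ((tendsto_survivalProb_atTop hM hterm).comp (tendsto_add_atTop_nat (k + 1)))
      (.inr (ENNReal.inv_ne_top.mpr hk))
  exact tendsto_of_tendsto_of_tendsto_of_le_of_le tendsto_const_nhds hshift (fun _ => zero_le)
    fun m => (ENNReal.mul_le_iff_le_inv hk (epiStep_ne_top hM s k v)).mp (hle m)

theorem epiStep_succ_eq_tsum (s : σ) (n : ℕ) (u : σ) :
    epiStep M T s (n + 1) u = ∑' w, if w ∈ T then 0 else M s w * epiStep M T w n u := by
  rw [add_comm, ← zero_add 1]
  exact epiStep_add_add_one s 0 n u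

theorem mem_or_epiStep_ne_zero_of_stepProb_ne_zero (s : σ) (hker : ∀ w ∈ T, M w = M s)
    {s' : σ} (hs' : s' ∈ T) :
    ∀ t v, stepProb M t s' v ≠ 0 → v ∈ T ∨ ∃ k, epiStep M T s k v ≠ 0
  | 0, v, h => by
    left
    have : s' = v := by
      by_contra hne
      exact h (if_neg hne)
    exact this ▸ hs'
  | t + 1, v, h => by
    obtain ⟨w, hw⟩ : ∃ w, stepProb M t s' w * M w v ≠ 0 := by
      by_contra! hc
      exact h (ENNReal.tsum_eq_zero.mpr hc)
    obtain ⟨hw1, hw2⟩ := mul_ne_zero_iff.mp hw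
    by_cases hwT : w ∈ T
    · exact .inr ⟨0, by rwa [epiStep, ← hker w hwT]⟩
    · obtain hwT' | ⟨k, hk⟩ := mem_or_epiStep_ne_zero_of_stepProb_ne_zero s hker hs' t w hw1
      · exact absurd hwT' hwT
      have hle : (if w ∈ T then 0 else epiStep M T s k w * M w v) ≤ epiStep M T s (k + 1) v :=
        ENNReal.le_tsum w
      rw [if_neg hwT] at hle
      exact .inr ⟨k + 1, (pos_iff_ne_zero.mpr (mul_ne_zero hk hw2)).trans_le hle |>.ne'⟩

theorem tendsto_survivalProb_of_stepProb_ne_zero (hM : ∀ v, ∑' u, M v u = 1) {s s' v : σ}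
    (hker : ∀ w ∈ T, M w = M s) (hterm : ∑' t, termHit M T s t = 1) (hs' : s' ∈ T) {t : ℕ}
    (ht : stepProb M t s' v ≠ 0) :
    Tendsto (survivalProb M T v) atTop (𝓝 0) := by
  by_cases hv : v ∈ T
  · have hrow : survivalProb M T v = survivalProb M T s := funext fun n => by
      simp only [survivalProb, epiStep_eq_of_row_eq (hker v hv) n]
    exact hrow ▸ tendsto_survivalProb_atTop hM hterm
  · obtain hv' | ⟨k, hk⟩ := mem_or_epiStep_ne_zero_of_stepProb_ne_zero s hker hs' t v ht
    · exact absurd hv' hv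
    · exact tendsto_survivalProb_of_epiStep_ne_zero hM hterm hv hk

section Stationary

variable {ρ : σ → ℝ≥0∞} {s : σ}

theorem stationary_eq_mul_row_add (hker : ∀ w ∈ T, M w = M s)
    (hρ : ∀ u, ρ u = ∑' v, ρ v * M v u) (u : σ) :
    ρ u = (∑' v, if v ∈ T then ρ v else 0) * M s u
      + ∑' v, if v ∈ T then 0 else ρ v * M v u := by
  rw [← ENNReal.tsum_mul_right, ← ENNReal.tsum_add, hρ u]
  refine tsum_congr fun v => ?_
  split_ifs with hv
  · rw [hker v hv, add_zero]
  · rw [zero_mul, zero_add]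

theorem residualMass_eq_mul_epiStep_add (hker : ∀ w ∈ T, M w = M s)
    (hρ : ∀ u, ρ u = ∑' v, ρ v * M v u) (n : ℕ) (u : σ) :
    residualMass M T ρ n u = (∑' v, if v ∈ T then ρ v else 0) * epiStep M T s (n + 1) u
      + residualMass M T ρ (n + 1) u := by
  set ρT := ∑' v, if v ∈ T then ρ v else 0
  calc residualMass M T ρ n u
      = ∑' w, if w ∈ T then 0 else (ρT * M s w
          + ∑' v, if v ∈ T then 0 else ρ v * M v w) * epiStep M T w n u := by
        refine tsum_congr fun w => ?_
        split_ifs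
        · rfl
        · rw [← stationary_eq_mul_row_add hker hρ w]
    _ = ρT * ∑' w, (if w ∈ T then 0 else M s w * epiStep M T w n u)
          + ∑' w, ∑' v, if w ∈ T then 0 else
              if v ∈ T then 0 else ρ v * (M v w * epiStep M T w n u) := by
        rw [← ENNReal.tsum_mul_left, ← ENNReal.tsum_add]
        refine tsum_congr fun w => ?_
        split_ifs
        · simp
        · rw [add_mul, mul_assoc]
          congr 1
          rw [← ENNReal.tsum_mul_right]
          exact tsum_congr fun v => by split_ifs <;> simp [mul_assoc]
    _ = _ := by
        rw [ENNReal.tsum_comm, epiStep_succ_eq_tsum]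
        congr 1
        refine tsum_congr fun v => ?_
        split_ifs
        · simp
        · rw [epiStep_succ_eq_tsum, ← ENNReal.tsum_mul_left]
          exact tsum_congr fun w => by split_ifs <;> simp

theorem stationary_eq_mul_sum_epiStep_add (hker : ∀ w ∈ T, M w = M s)
    (hρ : ∀ u, ρ u = ∑' v, ρ v * M v u) (n : ℕ) (u : σ) :
    ρ u = (∑' v, if v ∈ T then ρ v else 0) * ∑ t ∈ Finset.range (n + 1), epiStep M T s t u
      + residualMass M T ρ n u := by
  induction n with
  | zero => simpa [epiStep, residualMass] using stationary_eq_mul_row_add hker hρ u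
  | succ n ih =>
    rw [ih, residualMass_eq_mul_epiStep_add hker hρ n u, Finset.sum_range_succ _ (n + 1),
      mul_add, add_assoc]

theorem tendsto_residualMass_atTop (hM : ∀ v, ∑' u, M v u = 1) (hρ : ∑' v, ρ v ≠ ∞)
    (hsurv : ∀ v, ρ v ≠ 0 → Tendsto (survivalProb M T v) atTop (𝓝 0)) (u : σ) :
    Tendsto (residualMass M T ρ · u) atTop (𝓝 0) := by
  have hlim : ∀ v, Tendsto (fun n => if v ∈ T then 0 else ρ v * epiStep M T v n u) atTop
      (𝓝 0) := fun v => by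
    by_cases hvT : v ∈ T
    · simp [hvT]
    by_cases hv : ρ v = 0
    · simp [hv]
    have hρv : ρ v ≠ ∞ := ne_top_of_le_ne_top hρ (ENNReal.le_tsum v)
    have hmul := ENNReal.Tendsto.const_mul (hsurv v hv) (.inr hρv)
    rw [mul_zero] at hmul
    simp only [hvT, if_false]
    exact tendsto_of_tendsto_of_tendsto_of_le_of_le tendsto_const_nhds hmul (fun _ => zero_le)
      fun n => mul_le_mul_right (ENNReal.le_tsum u) _
  have hbound : ∀ n v, (if v ∈ T then 0 else ρ v * epiStep M T v n u) ≤ ρ v := fun n v => by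
    split_ifs
    · exact zero_le
    · exact mul_le_of_le_one_right zero_le (epiStep_le_one hM v n u)
  have hdom := ENNReal.tendsto_tsum_of_dominated_convergence hρ hbound hlim
  rwa [tsum_zero] at hdom

theorem stationary_eq_mul_tsum_epiStep (hM : ∀ v, ∑' u, M v u = 1)
    (hker : ∀ w ∈ T, M w = M s) (hρ : ∀ u, ρ u = ∑' v, ρ v * M v u) (hρfin : ∑' v, ρ v ≠ ∞)
    (hsurv : ∀ v, ρ v ≠ 0 → Tendsto (survivalProb M T v) atTop (𝓝 0)) (u : σ) :
    ρ u = (∑' v, if v ∈ T then ρ v else 0) * ∑' t, epiStep M T s t u := by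
  have hρT : ∑' v, (if v ∈ T then ρ v else 0) ≠ ∞ :=
    ne_top_of_le_ne_top hρfin (ENNReal.tsum_le_tsum fun v => by split_ifs <;> simp)
  have hpartial := (ENNReal.tendsto_nat_tsum (epiStep M T s · u)).comp (tendsto_add_atTop_nat 1)
  have hlim := (ENNReal.Tendsto.const_mul hpartial (.inr hρT)).add
    (tendsto_residualMass_atTop hM hρfin hsurv u)
  rw [add_zero] at hlim
  refine tendsto_nhds_unique ?_ hlim
  simpa only [Function.comp_def, ← stationary_eq_mul_sum_epiStep_add hker hρ] using
    tendsto_const_nhds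

theorem tsum_epiStep_eq_meanEpiLen_mul (hM : ∀ v, ∑' u, M v u = 1)
    (hker : ∀ w ∈ T, M w = M s) (hρ : ∀ u, ρ u = ∑' v, ρ v * M v u) (hρ1 : ∑' v, ρ v = 1)
    (hsurv : ∀ v, ρ v ≠ 0 → Tendsto (survivalProb M T v) atTop (𝓝 0))
    (hterm : ∑' t, termHit M T s t = 1) (u : σ) :
    ∑' t, epiStep M T s t u = meanEpiLen M T s * ρ u := by
  have hρfin : ∑' v, ρ v ≠ ∞ := hρ1 ▸ ENNReal.one_ne_top
  have hocc := stationary_eq_mul_tsum_epiStep hM hker hρ hρfin hsurv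
  have hmass : (∑' v, if v ∈ T then ρ v else 0) * meanEpiLen M T s = 1 := by
    rw [← tsum_survivalProb hM hterm]
    simp only [survivalProb]
    rw [ENNReal.tsum_comm, ← ENNReal.tsum_mul_left]
    simp_rw [← hocc]
    exact hρ1
  rw [hocc, ← mul_assoc, mul_comm (meanEpiLen M T s), hmass, one_mul]

end Stationary

end Episode

section Chain

variable {S A : Type} {P : S → A → S → ℝ≥0∞} {π : S → A → ℝ≥0∞}

theorem tsum_chainOf_eq_one (hP : ∀ s a, ∑' s', P s a s' = 1) (hπ : ∀ s, ∑' a, π s a = 1)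
    (s : S) : ∑' s', chainOf P π s s' = 1 := by
  simp only [chainOf]
  rw [ENNReal.tsum_comm]
  simp_rw [ENNReal.tsum_mul_left, hP, mul_one, hπ]

theorem chainOf_eq_of_forall {s : S} {Q : S → ℝ≥0∞} (hπ : ∑' a, π s a = 1)
    (h : ∀ a, P s a = Q) : chainOf P π s = Q := by
  funext u
  simp only [chainOf, h, ENNReal.tsum_mul_right, hπ, one_mul]

theorem chainOf_eq_of_mem_termSet {ρ0 : S → ℝ≥0∞} (hπ : ∀ s, ∑' a, π s a = 1) {s₀ s : S}
    (hs₀ : 0 < ρ0 s₀) (hs : s ∈ TermSet P ρ0) : chainOf P π s = chainOf P π s₀ :=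
  chainOf_eq_of_forall (hπ s) fun a =>
    (chainOf_eq_of_forall (hπ s₀) fun a' => (hs s₀ hs₀ a a').symm).symm

end Chain

namespace ELP

variable {S A : Type} (E : ELP S A) {π : S → A → ℝ≥0∞}

theorem mem_termSet_of_pos {s : S} (hs : 0 < E.ρ0 s) : s ∈ TermSet E.P E.ρ0 :=
  fun s₀ hs₀ => E.homog s s₀ hs hs₀

theorem tendsto_survivalProb_of_mem_reachSet (hπ : ∀ s, ∑' a, π s a = 1) {sT v : S}
    (hsT : 0 < E.ρ0 sT) (hv : v ∈ ReachSet (chainOf E.P π) E.ρ0) :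
    Tendsto (survivalProb (chainOf E.P π) (TermSet E.P E.ρ0) v) atTop (𝓝 0) := by
  obtain ⟨t, ht⟩ := hv
  obtain ⟨s₀, hs₀⟩ : ∃ s₀, E.ρ0 s₀ * stepProb (chainOf E.P π) t s₀ v ≠ 0 := by
    by_contra! h
    exact ht.ne' (ENNReal.tsum_eq_zero.mpr h)
  obtain ⟨hρ0, hstep⟩ := mul_ne_zero_iff.mp hs₀
  exact tendsto_survivalProb_of_stepProb_ne_zero (tsum_chainOf_eq_one E.P_sum hπ)
    (fun w hw => chainOf_eq_of_mem_termSet hπ hsT hw)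
    (E.epi_fin π hπ sT (E.mem_termSet_of_pos hsT)).1
    (E.mem_termSet_of_pos (pos_iff_ne_zero.mpr hρ0)) hstep

end ELP

theorem stmt_12_general {S A : Type} (E : ELP S A)
    (π : S → A → ℝ≥0∞) (hπ : ∀ s, ∑' a, π s a = 1)
    (sT : S) (hsT : 0 < E.ρ0 sT)
    (hRb : ∃ C, ∀ s, |E.R s| ≤ C)
    (ρ : S → ℝ≥0∞) (hρ1 : ∑' s, ρ s = 1)
    (hρ : ∀ s', ρ s' = ∑' s, ρ s * chainOf E.P π s s')
    (hρsupp : ∀ s, s ∉ ReachSet (chainOf E.P π) E.ρ0 → ρ s = 0) :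
    ∑' t : ℕ, ∑' u, (epiStep (chainOf E.P π) (TermSet E.P E.ρ0) sT t u).toReal * E.R u =
      (∑' s, (ρ s).toReal * E.R s) *
        (meanEpiLen (chainOf E.P π) (TermSet E.P E.ρ0) sT).toReal := by
  obtain ⟨C, hC⟩ := hRb
  have hM := tsum_chainOf_eq_one E.P_sum hπ
  obtain ⟨hterm, hlen⟩ := E.epi_fin π hπ sT (E.mem_termSet_of_pos hsT)
  have hocc := tsum_epiStep_eq_meanEpiLen_mul hM
    (fun w hw => chainOf_eq_of_mem_termSet hπ hsT hw) hρ hρ1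
    (fun v hv => E.tendsto_survivalProb_of_mem_reachSet hπ hsT (not_not.mp (mt (hρsupp v) hv)))
    hterm
  have hfin : ∑' t, ∑' u, epiStep (chainOf E.P π) (TermSet E.P E.ρ0) sT t u ≠ ∞ :=
    tsum_survivalProb hM hterm ▸ hlen.ne
  rw [tsum_tsum_toReal_mul_comm hfin hC, ← tsum_mul_right]
  simp_rw [hocc, ENNReal.toReal_mul]
  exact tsum_congr fun u => by ring

/-- Episode-wise performance equals steady-state performance times the expected episode
length: E[∑_{t=1}^T R(s_t)] = E_ρ[R] · E[T]. -/
theorem stmt_12 {S A : Type} [Countable S] [Countable A] (E : ELP S A)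
    (π : S → A → ℝ≥0∞) (hπ : ∀ s, ∑' a, π s a = 1)
    (sT : S) (hsT : 0 < E.ρ0 sT)
    (hRb : ∃ C, ∀ s, |E.R s| ≤ C)
    (ρ : S → ℝ≥0∞) (hρ1 : ∑' s, ρ s = 1)
    (hρ : ∀ s', ρ s' = ∑' s, ρ s * chainOf E.P π s s')
    (hρsupp : ∀ s, s ∉ ReachSet (chainOf E.P π) E.ρ0 → ρ s = 0) :
    ∑' t : ℕ, ∑' u, (epiStep (chainOf E.P π) (TermSet E.P E.ρ0) sT t u).toReal * E.R u =
      (∑' s, (ρ s).toReal * E.R s) *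
        (meanEpiLen (chainOf E.P π) (TermSet E.P E.ρ0) sT).toReal :=
  stmt_12_general E π hπ sT hsT hRb ρ hρ1 hρ hρsupp
end
end
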